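/- Let S be a ⟨∨,0⟩-semilattice that does not satisfy the ⟨ω,ω⟩-interpolation property, i.e. there exist an increasing sequence (a_n)_{n<ω} and a decreasing sequence (b_n)_{n<ω} in S with a_m ≤ b_n for all m, n < ω, but no c ∈ S with a_m ≤ c ≤ b_n for all m, n < ω. Then there exists an S-valued measure μ on the partial lattice P_{ω,ω} that cannot be factored through a lattice: there exist no lattice L, no homomorphism of partial lattices f : P_{ω,ω} → L, and no S-valued measure ν on L with μ(x,y) = ν(f(x), f(y)) for all x, y ∈ P_{ω,ω}. -/

import Mathlib

open Set Cardinal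

/-- Membership in the Boolean subalgebra of the powerset of `P` generated by the
lower subsets of `P`: the smallest family of subsets of `P` containing all lower
sets and closed under complementation and (binary) union (hence also under binary
intersection, and containing `∅` and `P`). -/
inductive IntMem (P : Type*) [Preorder P] : Set P → Prop
  | lower (s : Set P) : IsLowerSet s → IntMem P s
  | compl (s : Set P) : IntMem P s → IntMem P sᶜ
  | union (s t : Set P) : IntMem P s → IntMem P t → IntMem P (s ∪ t)

/-- `Int P`: the Boolean subalgebra of the powerset of `P` generated by the lower subsets
of `P`, viewed as a set of subsets of `P`. -/
def IntP (P : Type*) [Preorder P] : Set (Set P) := {s | IntMem P s}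

open Classical in
/-- `χ_o` : sends a subset of `{β | β < o}` to `false` if it is bounded (contained in some
`α < o`) and to `true` otherwise. -/
noncomputable def chiO (o : Ordinal) (x : Set ↥(Set.Iio o)) : Bool :=
  if ∃ α < o, ∀ β ∈ x, (β : Ordinal) < α then false else true

/-- The ambient Boolean algebra `(Set κ) × (Set λ) × (Set λ)` in which
`A_{κ,λ} = Int κ × Int λ × Int λ` lives. -/
abbrev Amb (κ lam : Cardinal) : Type _ :=
  Set ↥(Set.Iio κ.ord) × Set ↥(Set.Iio lam.ord) × Set ↥(Set.Iio lam.ord)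

/-- `A_{κ,λ} = Int κ × Int λ × Int λ`. -/
def ASet (κ lam : Cardinal) : Set (Amb κ lam) :=
  {p | p.1 ∈ IntP ↥(Set.Iio κ.ord) ∧ p.2.1 ∈ IntP ↥(Set.Iio lam.ord) ∧
       p.2.2 ∈ IntP ↥(Set.Iio lam.ord)}

/-- `U_{κ,λ} = {⟨x0,x1,x2⟩ ∈ A_{κ,λ} : χ_κ(x0) = χ_λ(x1) = χ_λ(x2)}`. -/
def USet (κ lam : Cardinal) : Set (Amb κ lam) :=
  {p ∈ ASet κ lam | chiO κ.ord p.1 = chiO lam.ord p.2.1 ∧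
    chiO lam.ord p.2.1 = chiO lam.ord p.2.2}

/-- `V_{κ,λ} = {⟨x0,x1,x2⟩ ∈ A_{κ,λ} : χ_κ(x0) = χ_λ(x1)}`. -/
def VSet (κ lam : Cardinal) : Set (Amb κ lam) :=
  {p ∈ ASet κ lam | chiO κ.ord p.1 = chiO lam.ord p.2.1}

/-- `P*_{κ,λ} = {⟨x0,x1,x2⟩ ∈ A_{κ,λ} : χ_κ(x0) = 0 or x1 ∪ x2 ≠ ∅}`. -/
def PstarSet (κ lam : Cardinal) : Set (Amb κ lam) :=
  {p ∈ ASet κ lam | chiO κ.ord p.1 = false ∨ p.2.1 ∪ p.2.2 ≠ ∅}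

/-- `P_{κ,λ} = {⟨x0,x1,x2⟩ ∈ A_{κ,λ} : χ_κ(x0) = χ_λ(x1) ∨ χ_λ(x2)}`. -/
def PkSet (κ lam : Cardinal) : Set (Amb κ lam) :=
  {p ∈ ASet κ lam | chiO κ.ord p.1 = chiO lam.ord p.2.1 ⊔ chiO lam.ord p.2.2}

open Classical in
/-- The map `σ = σ_{⃗a,⃗b} : P*_{κ,λ} → S` : `σ(⟨x0,x1,x2⟩) = a_{sup x0}` if
`x1 ∪ x2 = ∅` (in which case `x0` is bounded, so `sup x0 < κ`), and
`σ(⟨x0,x1,x2⟩) = b_{min (x1 ∪ x2)}` otherwise.  (Outside of `P*_{κ,λ}` the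
value of this function is irrelevant; junk value `⊥` is used when the
corresponding index is out of range.) -/
noncomputable def sigmaM (κ lam : Cardinal) {S : Type*} [SemilatticeSup S] [OrderBot S]
    (a : ↥(Set.Iio κ.ord) → S) (b : ↥(Set.Iio lam.ord) → S) (p : Amb κ lam) : S :=
  if p.2.1 ∪ p.2.2 = ∅ then
    if h : sSup (Subtype.val '' p.1) < κ.ord then a ⟨sSup (Subtype.val '' p.1), h⟩ else ⊥
  else
    if h : sInf (Subtype.val '' (p.2.1 ∪ p.2.2)) < lam.ord then
      b ⟨sInf (Subtype.val '' (p.2.1 ∪ p.2.2)), h⟩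
    else ⊥

/-- The measure `μ = μ_{⃗a,⃗b}` on `P_{κ,λ}` : `μ(x, y) = σ(x \ y)`. -/
noncomputable def muM (κ lam : Cardinal) {S : Type*} [SemilatticeSup S] [OrderBot S]
    (a : ↥(Set.Iio κ.ord) → S) (b : ↥(Set.Iio lam.ord) → S) (p q : Amb κ lam) : S :=
  sigmaM κ lam a b (p \ q)

/-!
Put `μ(x, y) = σ(x \ y)`, where `σ(x₀, x₁, x₂) = b_{min (x₁ ∪ x₂)}` if `x₁ ∪ x₂ ≠ ∅` and
`σ(x₀, ∅, ∅) = a_{max x₀}`. For `x, y ∈ P_{ω,ω}` the difference `x \ y` lies in `P*_{ω,ω}`, and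
there `σ` is the largest of the `a_n` (`n ∈ x₀`) and `b_n` (`n ∈ x₁ ∪ x₂`), hence preserves
joins; the measure axioms follow.

If `μ = ν (f -) (f -)` for a lattice `L`, take `e = (ω, ω, ∅)`, `e' = (ω, ∅, ω)` and
`c = ν (f e ⊓ f e') (f 0)`. As `t_m = (m + 1, ∅, ∅) ≤ e, e'`, we get `a_m = μ(t_m, 0) ≤ c`; as
`0 = y_n ∧ z_n` in `P_{ω,ω}` for `y_n = (ω, n, ω \ n)` and `z_n = (∅, ∅, n)`, we get
`c ≤ μ(e, y_n) ∨ μ(e', z_n) = b_n`. So `c` interpolates, which is possible in `L` only because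
`e ∧ e' = (ω, ∅, ∅)` is missing from `P_{ω,ω}`. Below, `e`, `e'`, `t_m`, `y_n`, `z_n` are
`leftElt`, `rightElt`, `lowerElt m`, `splitElt n`, `initElt n`.
-/

theorem IntMem.bddAbove_or_bddAbove_compl {P : Type*} [LinearOrder P] [Nonempty P] {s : Set P}
    (hs : IntMem P s) : BddAbove s ∨ BddAbove sᶜ := by
  induction hs with
  | lower s hs =>
    by_cases hu : s = Set.univ
    · exact .inr (by rw [hu, compl_univ]; exact bddAbove_empty)
    · obtain ⟨t, ht⟩ := (ne_univ_iff_exists_notMem s).1 hu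
      exact .inl ⟨t, fun u hu => le_of_lt (not_le.1 fun htu => ht (hs htu hu))⟩
  | compl s _ ih => rwa [compl_compl, or_comm]
  | union s t _ _ ihs iht =>
    rw [compl_union]
    rcases ihs with hs | hs
    · exact iht.imp (hs.union ·) (·.mono inter_subset_right)
    · exact .inr (hs.mono inter_subset_left)

theorem IntMem.sdiff {P : Type*} [Preorder P] {s t : Set P} (hs : IntMem P s)
    (ht : IntMem P t) : IntMem P (s \ t) := by
  rw [← compl_compl (s \ t), compl_sdiff]
  exact .compl _ (.union _ _ ht (.compl _ hs))

theorem chiO_eq_false_iff {o : Ordinal} (ho : Order.IsSuccLimit o) (s : Set (Iio o)) :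
    chiO o s = false ↔ BddAbove s := by
  unfold chiO
  split_ifs with h
  · obtain ⟨α, hα, hs⟩ := h
    exact iff_of_true rfl ⟨⟨α, hα⟩, fun β hβ => (hs β hβ).le⟩
  · refine iff_of_false (by simp) fun ⟨t, ht⟩ => h ?_
    exact ⟨Order.succ t, ho.succ_lt t.2, fun β hβ => Order.lt_succ_of_le (ht hβ)⟩

theorem chiO_eq_true_iff {o : Ordinal} (ho : Order.IsSuccLimit o) (s : Set (Iio o)) :
    chiO o s = true ↔ ¬BddAbove s := by
  rw [← chiO_eq_false_iff ho, Bool.not_eq_false]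

theorem mem_PkSet_iff {κ lam : Cardinal} (hκ : ℵ₀ ≤ κ) (hlam : ℵ₀ ≤ lam) {p : Amb κ lam} :
    p ∈ PkSet κ lam ↔
      p ∈ ASet κ lam ∧ (BddAbove p.1 ↔ BddAbove p.2.1 ∧ BddAbove p.2.2) := by
  refine and_congr_right fun _ => ?_
  rw [Bool.eq_iff_iff, chiO_eq_true_iff (isSuccLimit_ord hκ), Bool.max_eq_or, Bool.or_eq_true,
    chiO_eq_true_iff (isSuccLimit_ord hlam), chiO_eq_true_iff (isSuccLimit_ord hlam)]
  tauto

theorem sdiff_mem_PstarSet {κ lam : Cardinal} (hκ : ℵ₀ ≤ κ) (hlam : ℵ₀ ≤ lam)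
    {x q : Amb κ lam} (hx : x ∈ PkSet κ lam) (hq : q ∈ PkSet κ lam) :
    x \ q ∈ PstarSet κ lam := by
  rw [mem_PkSet_iff hκ hlam] at hx hq
  obtain ⟨⟨hx0, hx1, hx2⟩, hx⟩ := hx
  obtain ⟨⟨hq0, hq1, hq2⟩, hq⟩ := hq
  refine ⟨⟨IntMem.sdiff hx0 hq0, IntMem.sdiff hx1 hq1, IntMem.sdiff hx2 hq2⟩, ?_⟩
  rw [chiO_eq_false_iff (isSuccLimit_ord hκ), or_iff_not_imp_right, not_not]
  intro hempty
  obtain ⟨h1, h2⟩ := union_empty_iff.1 hempty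
  have : Nonempty (Iio κ.ord) := ⟨⟨0, (isSuccLimit_ord hκ).bot_lt⟩⟩
  rcases hq0.bddAbove_or_bddAbove_compl with hb | hb
  · obtain ⟨hb1, hb2⟩ := hq.1 hb
    exact (hx.2 ⟨hb1.mono (sdiff_eq_empty.1 h1), hb2.mono (sdiff_eq_empty.1 h2)⟩).mono sdiff_subset
  · exact hb.mono fun _ h => h.2

noncomputable def natOrderIso : ℕ ≃o Iio (ℵ₀ : Cardinal).ord :=
  StrictMono.orderIsoOfSurjective (fun n => ⟨n, by simp⟩)
    (fun _ _ h => by simpa using h)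
    (fun t => by
      obtain ⟨n, hn⟩ := Ordinal.lt_omega0.1 (by simpa using t.2)
      exact ⟨n, Subtype.ext hn.symm⟩)

instance : NoMaxOrder (Iio (ℵ₀ : Cardinal).ord) :=
  (isSuccLimit_ord le_rfl).isSuccPrelimit.noMaxOrder_Iio

instance : Nonempty (Iio (ℵ₀ : Cardinal).ord) := ⟨natOrderIso 0⟩

section IntMem

variable {t : Iio (ℵ₀ : Cardinal).ord}

theorem intMem_univ : IntMem (Iio (ℵ₀ : Cardinal).ord) univ := .lower _ isLowerSet_univ
theorem intMem_empty : IntMem (Iio (ℵ₀ : Cardinal).ord) ∅ := .lower _ isLowerSet_empty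
theorem intMem_Iic : IntMem (Iio (ℵ₀ : Cardinal).ord) (Iic t) := .lower _ (isLowerSet_Iic t)
theorem intMem_Iio : IntMem (Iio (ℵ₀ : Cardinal).ord) (Iio t) := .lower _ (isLowerSet_Iio t)
theorem intMem_Ici : IntMem (Iio (ℵ₀ : Cardinal).ord) (Ici t) := by
  rw [← compl_Iio]; exact .compl _ intMem_Iio

end IntMem

def collapse : SupBotHom (Amb ℵ₀ ℵ₀) (Set ℕ × Set ℕ) where
  toFun u := (natOrderIso ⁻¹' u.1, natOrderIso ⁻¹' (u.2.1 ∪ u.2.2))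
  map_sup' u v := by
    ext n <;> simp only [Prod.fst_sup, Prod.snd_sup, sup_eq_union, mem_preimage, mem_union]
    tauto
  map_bot' := by ext <;> simp

@[simp] theorem collapse_apply (u : Amb ℵ₀ ℵ₀) :
    collapse u = (natOrderIso ⁻¹' u.1, natOrderIso ⁻¹' (u.2.1 ∪ u.2.2)) := rfl

def admissible : Set (Set ℕ × Set ℕ) := {p | p.2.Nonempty ∨ BddAbove p.1}

theorem bot_mem_admissible : ⊥ ∈ admissible := .inr bddAbove_empty

theorem supClosed_admissible : SupClosed admissible := by
  rintro p (hp | hp) q hq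
  · exact .inl (hp.mono (le_sup_left : p ≤ p ⊔ q).2)
  rcases hq with hq | hq
  · exact .inl (hq.mono (le_sup_right : q ≤ p ⊔ q).2)
  · exact .inr (hp.union hq)

theorem collapse_mem_admissible {u : Amb ℵ₀ ℵ₀} (hu : u ∈ PstarSet ℵ₀ ℵ₀) :
    collapse u ∈ admissible := by
  rcases hu.2 with h | h
  · rw [chiO_eq_false_iff (isSuccLimit_ord le_rfl)] at h
    exact .inr (natOrderIso.bddAbove_preimage.2 h)
  · exact .inl ((nonempty_iff_ne_empty.2 h).preimage natOrderIso.surjective)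

section Measure

variable {S : Type*} [SemilatticeSup S] [OrderBot S] {a b : ℕ → S}

open Classical in
noncomputable def sigmaNat (a b : ℕ → S) (p : Set ℕ × Set ℕ) : S :=
  if p.2.Nonempty then b (sInf p.2) else if p.1.Nonempty then a (sSup p.1) else ⊥

theorem sigmaNat_bot : sigmaNat a b ⊥ = ⊥ := by simp [sigmaNat]

theorem sigmaNat_le_iff (ha : Monotone a) (hb : Antitone b) (hab : ∀ m n, a m ≤ b n)
    {p : Set ℕ × Set ℕ} (hp : p ∈ admissible) {c : S} :
    sigmaNat a b p ≤ c ↔ (∀ n ∈ p.1, a n ≤ c) ∧ ∀ n ∈ p.2, b n ≤ c := by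
  unfold sigmaNat
  split_ifs with h2 h1
  · refine ⟨fun h => ⟨fun n _ => (hab n _).trans h, fun n hn => (hb (Nat.sInf_le hn)).trans h⟩,
      fun h => h.2 _ (Nat.sInf_mem h2)⟩
  · have hbdd : BddAbove p.1 := hp.resolve_left h2
    rw [not_nonempty_iff_eq_empty.1 h2]
    refine ⟨fun h => ⟨fun n hn => (ha (le_csSup hbdd hn)).trans h, by simp⟩,
      fun h => h.1 _ (Nat.sSup_mem h1 hbdd)⟩
  · simp [not_nonempty_iff_eq_empty.1 h1, not_nonempty_iff_eq_empty.1 h2]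

theorem sigmaNat_sup (ha : Monotone a) (hb : Antitone b) (hab : ∀ m n, a m ≤ b n)
    {p q : Set ℕ × Set ℕ} (hp : p ∈ admissible) (hq : q ∈ admissible) :
    sigmaNat a b (p ⊔ q) = sigmaNat a b p ⊔ sigmaNat a b q := by
  refine eq_of_forall_ge_iff fun c => ?_
  rw [sigmaNat_le_iff ha hb hab (supClosed_admissible hp hq), sup_le_iff,
    sigmaNat_le_iff ha hb hab hp, sigmaNat_le_iff ha hb hab hq]
  simp only [Prod.fst_sup, Prod.snd_sup, sup_eq_union, mem_union, or_imp, forall_and]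
  tauto

theorem sigmaNat_mono (ha : Monotone a) (hb : Antitone b) (hab : ∀ m n, a m ≤ b n)
    {p q : Set ℕ × Set ℕ} (hp : p ∈ admissible) (hq : q ∈ admissible) (hpq : p ≤ q) :
    sigmaNat a b p ≤ sigmaNat a b q := by
  rw [← sup_eq_right.2 hpq, sigmaNat_sup ha hb hab hp hq]
  exact le_sup_left

theorem sigmaNat_finset_sup (ha : Monotone a) (hb : Antitone b) (hab : ∀ m n, a m ≤ b n)
    {ι : Type*} {s : Finset ι} {f : ι → Set ℕ × Set ℕ} (hf : ∀ i ∈ s, f i ∈ admissible) :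
    sigmaNat a b (s.sup f) = s.sup (sigmaNat a b ∘ f) := by
  induction s using Finset.cons_induction with
  | empty => exact sigmaNat_bot
  | cons i s hi ih =>
    rw [Finset.forall_mem_cons] at hf
    have hs : s.sup f ∈ admissible :=
      Finset.sup_induction bot_mem_admissible (fun _ h _ h' => supClosed_admissible h h') hf.2
    rw [Finset.sup_cons, Finset.sup_cons, sigmaNat_sup ha hb hab hf.1 hs, ih hf.2]
    rfl

noncomputable def mu (a b : ℕ → S) (x q : Amb ℵ₀ ℵ₀) : S :=
  sigmaNat a b (collapse (x \ q))

theorem collapse_sdiff_mem_admissible {x q : Amb ℵ₀ ℵ₀} (hx : x ∈ PkSet ℵ₀ ℵ₀)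
    (hq : q ∈ PkSet ℵ₀ ℵ₀) : collapse (x \ q) ∈ admissible :=
  collapse_mem_admissible (sdiff_mem_PstarSet le_rfl le_rfl hx hq)

theorem mu_eq_bot_of_le {x q : Amb ℵ₀ ℵ₀} (h : x ≤ q) : mu a b x q = ⊥ := by
  rw [mu, sdiff_eq_bot_iff.2 h, map_bot, sigmaNat_bot]

theorem mu_le_mu_sup_mu (ha : Monotone a) (hb : Antitone b) (hab : ∀ m n, a m ≤ b n)
    {x y z : Amb ℵ₀ ℵ₀} (hx : x ∈ PkSet ℵ₀ ℵ₀) (hy : y ∈ PkSet ℵ₀ ℵ₀) (hz : z ∈ PkSet ℵ₀ ℵ₀) :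
    mu a b x z ≤ mu a b x y ⊔ mu a b y z := by
  have hxy := collapse_sdiff_mem_admissible hx hy
  have hyz := collapse_sdiff_mem_admissible hy hz
  calc mu a b x z ≤ sigmaNat a b (collapse (x \ y) ⊔ collapse (y \ z)) := by
        refine sigmaNat_mono ha hb hab (collapse_sdiff_mem_admissible hx hz)
          (supClosed_admissible hxy hyz) ?_
        rw [← map_sup]
        exact OrderHomClass.mono collapse (sdiff_triangle x y z)
    _ = mu a b x y ⊔ mu a b y z := sigmaNat_sup ha hb hab hxy hyz

theorem mu_finset_sup (ha : Monotone a) (hb : Antitone b) (hab : ∀ m n, a m ≤ b n)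
    {X : Finset (Amb ℵ₀ ℵ₀)} (hX : ↑X ⊆ PkSet ℵ₀ ℵ₀) {q : Amb ℵ₀ ℵ₀} (hq : q ∈ PkSet ℵ₀ ℵ₀) :
    mu a b (X.sup id) q = X.sup fun x => mu a b x q := by
  rw [mu, ← Finset.sup_sdiff_right, map_finset_sup]
  exact sigmaNat_finset_sup ha hb hab fun x hx => collapse_sdiff_mem_admissible (hX hx) hq

theorem mu_finset_inf (ha : Monotone a) (hb : Antitone b) (hab : ∀ m n, a m ≤ b n)
    {Y : Finset (Amb ℵ₀ ℵ₀)} (hY : ↑Y ⊆ PkSet ℵ₀ ℵ₀) {p : Amb ℵ₀ ℵ₀} (hp : p ∈ PkSet ℵ₀ ℵ₀) :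
    mu a b p (Y.inf id) = Y.sup fun y => mu a b p y := by
  rw [mu, ← Finset.sup_sdiff_left, map_finset_sup]
  exact sigmaNat_finset_sup ha hb hab fun y hy => collapse_sdiff_mem_admissible hp (hY hy)

end Measure

theorem map_inf_of_map_finset_inf {α L : Type*} [Lattice α] [OrderTop α] [DecidableEq α]
    [Lattice L] {P : Set α} {f : α → L}
    (hf : ∀ Y : Finset α, ∀ hY : Y.Nonempty, ↑Y ⊆ P → Y.inf id ∈ P → f (Y.inf id) = Y.inf' hY f)
    {x y : α} (hx : x ∈ P) (hy : y ∈ P) (hxy : x ⊓ y ∈ P) : f (x ⊓ y) = f x ⊓ f y := by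
  simpa using hf {x, y} (Finset.insert_nonempty _ _) (by simp [insert_subset_iff, hx, hy])
    (by simpa using hxy)

section LatticeMeasure

variable {L S : Type*} [SemilatticeSup S] [OrderBot S] {ν : L → L → S}

theorem measure_le_of_le_left [Preorder L] (hle : ∀ x y, x ≤ y → ν x y = ⊥)
    (htri : ∀ x y z, ν x z ≤ ν x y ⊔ ν y z) {x y z : L} (h : x ≤ y) : ν x z ≤ ν y z := by
  simpa [hle x y h] using htri x y z

theorem measure_inf_inf_le [Lattice L] (hle : ∀ x y, x ≤ y → ν x y = ⊥)
    (htri : ∀ x y z, ν x z ≤ ν x y ⊔ ν y z) (hinf : ∀ x y z, ν x (y ⊓ z) = ν x y ⊔ ν x z)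
    (x x' y y' : L) : ν (x ⊓ x') (y ⊓ y') ≤ ν x y ⊔ ν x' y' := by
  rw [hinf]
  exact sup_le_sup (measure_le_of_le_left hle htri inf_le_left)
    (measure_le_of_le_left hle htri inf_le_right)

end LatticeMeasure

noncomputable def lowerElt (m : ℕ) : Amb ℵ₀ ℵ₀ := (Iic (natOrderIso m), ∅, ∅)
def leftElt : Amb ℵ₀ ℵ₀ := (univ, univ, ∅)
def rightElt : Amb ℵ₀ ℵ₀ := (univ, ∅, univ)
noncomputable def splitElt (n : ℕ) : Amb ℵ₀ ℵ₀ :=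
  (univ, Iio (natOrderIso n), Ici (natOrderIso n))
noncomputable def initElt (n : ℕ) : Amb ℵ₀ ℵ₀ := (∅, ∅, Iio (natOrderIso n))

theorem bot_mem_PkSet : ⊥ ∈ PkSet ℵ₀ ℵ₀ := by
  rw [mem_PkSet_iff le_rfl le_rfl]
  exact ⟨⟨intMem_empty, intMem_empty, intMem_empty⟩, by simp⟩

theorem lowerElt_mem (m : ℕ) : lowerElt m ∈ PkSet ℵ₀ ℵ₀ := by
  rw [mem_PkSet_iff le_rfl le_rfl]
  exact ⟨⟨intMem_Iic, intMem_empty, intMem_empty⟩, by simp [lowerElt, bddAbove_Iic]⟩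

theorem leftElt_mem : leftElt ∈ PkSet ℵ₀ ℵ₀ := by
  rw [mem_PkSet_iff le_rfl le_rfl]
  exact ⟨⟨intMem_univ, intMem_univ, intMem_empty⟩, by simp [leftElt]⟩

theorem rightElt_mem : rightElt ∈ PkSet ℵ₀ ℵ₀ := by
  rw [mem_PkSet_iff le_rfl le_rfl]
  exact ⟨⟨intMem_univ, intMem_empty, intMem_univ⟩, by simp [rightElt]⟩

theorem splitElt_mem (n : ℕ) : splitElt n ∈ PkSet ℵ₀ ℵ₀ := by
  rw [mem_PkSet_iff le_rfl le_rfl]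
  exact ⟨⟨intMem_univ, intMem_Iio, intMem_Ici⟩, by simp [splitElt, not_bddAbove_Ici]⟩

theorem initElt_mem (n : ℕ) : initElt n ∈ PkSet ℵ₀ ℵ₀ := by
  rw [mem_PkSet_iff le_rfl le_rfl]
  exact ⟨⟨intMem_empty, intMem_empty, intMem_Iio⟩, by simp [initElt, bddAbove_Iio]⟩

theorem lowerElt_le_leftElt (m : ℕ) : lowerElt m ≤ leftElt := by
  simp [lowerElt, leftElt]

theorem lowerElt_le_rightElt (m : ℕ) : lowerElt m ≤ rightElt := by
  simp [lowerElt, rightElt]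

theorem splitElt_inf_initElt (n : ℕ) : splitElt n ⊓ initElt n = ⊥ := by
  ext <;> simp [splitElt, initElt]

section Values

variable {S : Type*} [SemilatticeSup S] [OrderBot S] (a b : ℕ → S)

theorem mu_lowerElt_bot (m : ℕ) : mu a b (lowerElt m) ⊥ = a m := by
  simp [mu, lowerElt, sigmaNat]

theorem mu_leftElt_splitElt (n : ℕ) : mu a b leftElt (splitElt n) = b n := by
  simp [mu, leftElt, splitElt, sigmaNat, ← compl_eq_univ_sdiff]

theorem mu_rightElt_initElt (n : ℕ) : mu a b rightElt (initElt n) = b n := by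
  simp [mu, rightElt, initElt, sigmaNat, ← compl_eq_univ_sdiff]

end Values

theorem exists_measure_not_factoring.{u} {S : Type*} [SemilatticeSup S] [OrderBot S]
    (a b : ℕ → S) (ha : Monotone a) (hb : Antitone b)
    (hab : ∀ m n : ℕ, a m ≤ b n)
    (hni : ¬∃ c : S, (∀ m, a m ≤ c) ∧ ∀ n, c ≤ b n) :
    ∃ μ : Amb ℵ₀ ℵ₀ → Amb ℵ₀ ℵ₀ → S,
      -- μ is an S-valued measure on the partial lattice P_{ω,ω} :
      ((∀ x ∈ PkSet ℵ₀ ℵ₀, ∀ y ∈ PkSet ℵ₀ ℵ₀, x ≤ y → μ x y = ⊥) ∧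
       (∀ x ∈ PkSet ℵ₀ ℵ₀, ∀ y ∈ PkSet ℵ₀ ℵ₀, ∀ z ∈ PkSet ℵ₀ ℵ₀,
          μ x z ≤ μ x y ⊔ μ y z) ∧
       (∀ X : Finset (Amb ℵ₀ ℵ₀), X.Nonempty → ↑X ⊆ PkSet ℵ₀ ℵ₀ →
          X.sup id ∈ PkSet ℵ₀ ℵ₀ → ∀ q ∈ PkSet ℵ₀ ℵ₀,
          μ (X.sup id) q = X.sup fun x => μ x q) ∧
       (∀ Y : Finset (Amb ℵ₀ ℵ₀), Y.Nonempty → ↑Y ⊆ PkSet ℵ₀ ℵ₀ →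
          Y.inf id ∈ PkSet ℵ₀ ℵ₀ → ∀ p ∈ PkSet ℵ₀ ℵ₀,
          μ p (Y.inf id) = Y.sup fun y => μ p y)) ∧
      -- and μ cannot be factored through a lattice :
      ∀ (L : Type u) [Lattice L], ∀ f : Amb ℵ₀ ℵ₀ → L,
        (∀ x ∈ PkSet ℵ₀ ℵ₀, ∀ y ∈ PkSet ℵ₀ ℵ₀, x ≤ y → f x ≤ f y) →
        (∀ X : Finset (Amb ℵ₀ ℵ₀), ∀ hX : X.Nonempty, ↑X ⊆ PkSet ℵ₀ ℵ₀ →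
          X.sup id ∈ PkSet ℵ₀ ℵ₀ → f (X.sup id) = X.sup' hX f) →
        (∀ Y : Finset (Amb ℵ₀ ℵ₀), ∀ hY : Y.Nonempty, ↑Y ⊆ PkSet ℵ₀ ℵ₀ →
          Y.inf id ∈ PkSet ℵ₀ ℵ₀ → f (Y.inf id) = Y.inf' hY f) →
        ∀ ν : L → L → S,
        (∀ x y : L, x ≤ y → ν x y = ⊥) →
        (∀ x y z : L, ν x z ≤ ν x y ⊔ ν y z) →
        (∀ x y z : L, ν (x ⊔ y) z = ν x z ⊔ ν y z) →
        (∀ x y z : L, ν x (y ⊓ z) = ν x y ⊔ ν x z) →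
        ¬∀ x ∈ PkSet ℵ₀ ℵ₀, ∀ y ∈ PkSet ℵ₀ ℵ₀, μ x y = ν (f x) (f y) := by
  classical
  refine ⟨mu a b, ⟨fun x _ y _ hxy => mu_eq_bot_of_le hxy,
    fun x hx y hy z hz => mu_le_mu_sup_mu ha hb hab hx hy hz,
    fun X _ hX _ q hq => mu_finset_sup ha hb hab hX hq,
    fun Y _ hY _ p hp => mu_finset_inf ha hb hab hY hp⟩, ?_⟩
  intro L _ f hf_mono _ hf_inf ν hle htri _ hinf hfac
  refine hni ⟨ν (f leftElt ⊓ f rightElt) (f ⊥), fun m => ?_, fun n => ?_⟩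
  · calc a m = ν (f (lowerElt m)) (f ⊥) := by
          rw [← hfac _ (lowerElt_mem m) _ bot_mem_PkSet, mu_lowerElt_bot]
      _ ≤ ν (f leftElt ⊓ f rightElt) (f ⊥) := measure_le_of_le_left hle htri <| le_inf
          (hf_mono _ (lowerElt_mem m) _ leftElt_mem (lowerElt_le_leftElt m))
          (hf_mono _ (lowerElt_mem m) _ rightElt_mem (lowerElt_le_rightElt m))
  · calc ν (f leftElt ⊓ f rightElt) (f ⊥)
        = ν (f leftElt ⊓ f rightElt) (f (splitElt n) ⊓ f (initElt n)) := by
          rw [← splitElt_inf_initElt n, map_inf_of_map_finset_inf hf_inf (splitElt_mem n)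
            (initElt_mem n) (by rw [splitElt_inf_initElt]; exact bot_mem_PkSet)]
      _ ≤ ν (f leftElt) (f (splitElt n)) ⊔ ν (f rightElt) (f (initElt n)) :=
          measure_inf_inf_le hle htri hinf _ _ _ _
      _ = b n := by
          rw [← hfac _ leftElt_mem _ (splitElt_mem n), ← hfac _ rightElt_mem _ (initElt_mem n),
            mu_leftElt_splitElt, mu_rightElt_initElt, sup_idem]
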